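/- arXiv:2503.02089 — 4 statements merged into one kernel-verified Lean document; each statement's English description precedes it below -/
import Mathlib

section
/- Let I = ([n],[m],V) be an ordered instance with v_{i,1} ≥ … ≥ v_{i,m} for each agent i, which is totally-α-irreducible (none of the reduction rules R_1(α), R_2(α), R_3(α) applies). Then m ≥ 2n, and for each agent i and each k ∈ {1,2,3}, every good j > (k−1)n satisfies v_{i,j} < α·MMS_i / k. -/
/-- For an ordered totally-α-irreducible instance: `m ≥ 2n`, and for each agent `i`,
each `k ∈ {1,2,3}` and every good with 1-based index `> (k-1)·n` (0-based index
`≥ (k-1)·n`), its value is `< α · MMS_i / k`.  The value `MMS i` is characterized as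
the maximin share of agent `i`: it is achieved by some partition and is an upper
bound on the minimum bundle value of every partition. -/
theorem totally_irreducible_bounds (n m : ℕ) (hn : 0 < n) (hm : 0 < m)
    (α : ℝ) (hα0 : 0 ≤ α) (hα1 : α ≤ 1)
    (v : Fin n → Fin m → ℝ) (hv : ∀ i j, 0 ≤ v i j)
    (hord : ∀ i, ∀ j j' : Fin m, j ≤ j' → v i j' ≤ v i j)
    (MMS : Fin n → ℝ)
    (hMMS : ∀ i,
      (∃ P : Fin m → Fin n, ∀ b : Fin n,
        MMS i ≤ ∑ g ∈ Finset.univ.filter (fun g => P g = b), v i g) ∧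
      (∀ P : Fin m → Fin n, ∃ b : Fin n,
        (∑ g ∈ Finset.univ.filter (fun g => P g = b), v i g) ≤ MMS i))
    -- R₁(α)-irreducible: v_i(g₁) < α·MMS_i
    (h1 : ∀ i, v i ⟨0, hm⟩ < α * MMS i)
    -- R₂(α)-irreducible: if m ≥ n+1 then v_i(gₙ)+v_i(g_{n+1}) < α·MMS_i, else S₂ = ∅
    (h2 : ∀ i, ∀ h : n + 1 ≤ m,
      v i ⟨n - 1, by omega⟩ + v i ⟨n, by omega⟩ < α * MMS i)
    (h2' : m < n + 1 → ∀ i, 0 < α * MMS i)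
    -- R₃(α)-irreducible: if m ≥ 2n+1 then v_i(g_{2n-1})+v_i(g_{2n})+v_i(g_{2n+1}) < α·MMS_i
    (h3 : ∀ i, ∀ h : 2 * n + 1 ≤ m,
      v i ⟨2 * n - 2, by omega⟩ + v i ⟨2 * n - 1, by omega⟩ + v i ⟨2 * n, by omega⟩
        < α * MMS i)
    (h3' : m < 2 * n + 1 → ∀ i, 0 < α * MMS i) :
    2 * n ≤ m ∧
      ∀ i : Fin n, ∀ k ∈ ({1, 2, 3} : Finset ℕ), ∀ j : Fin m,
        (k - 1) * n ≤ (j : ℕ) → v i j < α * MMS i / k := by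
  have hMMS0 : ∀ i, 0 ≤ MMS i := by
    intro i
    obtain ⟨-, h⟩ := hMMS i
    obtain ⟨b, hb⟩ := h (fun _ => ⟨0, hn⟩)
    exact le_trans (Finset.sum_nonneg fun g _ => hv i g) hb
  have hm2n : 2 * n ≤ m := by
    by_contra hlt
    push_neg at hlt
    set i : Fin n := ⟨0, hn⟩ with hi
    obtain ⟨⟨P, hP⟩, -⟩ := hMMS i
    have hsum : m = ∑ b : Fin n, (Finset.univ.filter (fun g => P g = b)).card := by
      have := Finset.card_eq_sum_card_fiberwise
        (f := P) (s := (Finset.univ : Finset (Fin m)))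
        (t := (Finset.univ : Finset (Fin n))) (fun x _ => Finset.mem_univ _)
      simpa using this
    obtain ⟨b, hb⟩ : ∃ b : Fin n, (Finset.univ.filter (fun g => P g = b)).card ≤ 1 := by
      by_contra h
      push_neg at h
      have : ∑ _b : Fin n, 2 ≤ ∑ b : Fin n, (Finset.univ.filter (fun g => P g = b)).card :=
        Finset.sum_le_sum fun b _ => h b
      simp only [Finset.sum_const, Finset.card_univ, Fintype.card_fin, smul_eq_mul] at this
      omega
    have hval : (∑ g ∈ Finset.univ.filter (fun g => P g = b), v i g) ≤ v i ⟨0, hm⟩ := by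
      calc (∑ g ∈ Finset.univ.filter (fun g => P g = b), v i g)
          ≤ (Finset.univ.filter (fun g => P g = b)).card • v i ⟨0, hm⟩ :=
            Finset.sum_le_card_nsmul _ _ _ (fun g _ => hord i ⟨0, hm⟩ g (by simp [Fin.le_def]))
        _ ≤ v i ⟨0, hm⟩ := by
            rcases Nat.le_one_iff_eq_zero_or_eq_one.mp hb with h0 | h0 <;>
              simp [h0, hv i ⟨0, hm⟩]
    have h1i := h1 i
    have hαm : α * MMS i ≤ MMS i := by
      nlinarith [hMMS0 i]
    have := hP b
    linarith
  refine ⟨hm2n, ?_⟩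
  intro i k hk j hj
  have hjm := j.isLt
  simp only [Finset.mem_insert, Finset.mem_singleton] at hk
  rcases hk with rfl | rfl | rfl
  · have := hord i ⟨0, hm⟩ j (by simp [Fin.le_def])
    have h1i := h1 i
    push_cast
    rw [div_one]
    linarith
  · have hnm : n < m := by omega
    have h2i := h2 i (by omega)
    have hle1 : v i j ≤ v i ⟨n, by omega⟩ :=
      hord i ⟨n, by omega⟩ j (by simp only [Fin.mk_le_mk, Fin.le_def]; omega)
    have hle2 : v i (⟨n, by omega⟩ : Fin m) ≤ v i ⟨n - 1, by omega⟩ :=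
      hord i ⟨n - 1, by omega⟩ ⟨n, by omega⟩ (by simp only [Fin.mk_le_mk, Fin.le_def]; omega)
    push_cast
    rw [lt_div_iff₀ (by norm_num : (0:ℝ) < 2)]
    linarith
  · have hm3 : 2 * n + 1 ≤ m := by omega
    have h3i := h3 i hm3
    have hle1 : v i j ≤ v i ⟨2 * n, by omega⟩ :=
      hord i ⟨2 * n, by omega⟩ j (by simp only [Fin.mk_le_mk, Fin.le_def]; omega)
    have hle2 : v i (⟨2 * n, by omega⟩ : Fin m) ≤ v i ⟨2 * n - 1, by omega⟩ :=
      hord i ⟨2 * n - 1, by omega⟩ ⟨2 * n, by omega⟩ (by simp only [Fin.mk_le_mk, Fin.le_def]; omega)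
    have hle3 : v i (⟨2 * n - 1, by omega⟩ : Fin m) ≤ v i ⟨2 * n - 2, by omega⟩ :=
      hord i ⟨2 * n - 2, by omega⟩ ⟨2 * n - 1, by omega⟩ (by simp only [Fin.mk_le_mk, Fin.le_def]; omega)
    push_cast
    rw [lt_div_iff₀ (by norm_num : (0:ℝ) < 3)]
    linarith
end

section
/- Let ([n],[m],V) be an ordered and normalized fair division instance (MMS_i = 1 and v_i([m]) = n for all i, with v_i(1) ≥ v_i(2) ≥ … ≥ v_i(m)). For all k ∈ [n] and each agent i, if v_i(k) + v_i(2n−k+1) > 1, then v_i(2n−k+1) ≤ 1/3 and v_i(k) > 2/3. -/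
/-- In an ordered, normalized instance (each agent has a partition into `n` bundles,
each of value exactly 1, so `MMS_i = 1` and `v_i([m]) = n`), for all `k ∈ [n]` and
each agent `i`: if `v_i(k) + v_i(2n-k+1) > 1` then `v_i(2n-k+1) ≤ 1/3` and
`v_i(k) > 2/3`.  (Goods are 1-based in the informal statement; here good `k` has
0-based index `k-1` and good `2n-k+1` has 0-based index `2n-k`.) -/
theorem ordered_normalized_upper_third (n m : ℕ) (hn : 0 < n) (hm : 2 * n ≤ m)
    (v : Fin n → Fin m → ℝ) (hv : ∀ i j, 0 ≤ v i j)
    (hord : ∀ i, ∀ j j' : Fin m, j ≤ j' → v i j' ≤ v i j)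
    (hnorm : ∀ i, ∃ P : Fin m → Fin n, ∀ b : Fin n,
      (∑ g ∈ Finset.univ.filter (fun g => P g = b), v i g) = 1)
    (k : ℕ) (hk1 : 1 ≤ k) (hkn : k ≤ n) (i : Fin n)
    (h : 1 < v i ⟨k - 1, by omega⟩ + v i ⟨2 * n - k, by omega⟩) :
    v i ⟨2 * n - k, by omega⟩ ≤ 1 / 3 ∧ 2 / 3 < v i ⟨k - 1, by omega⟩ := by
  classical
  obtain ⟨P, hP⟩ := hnorm i
  set a := v i ⟨k - 1, by omega⟩ with ha
  set c := v i ⟨2 * n - k, by omega⟩ with hc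
  have hac : c ≤ a := hord i ⟨k - 1, by omega⟩ ⟨2 * n - k, by omega⟩ (by
    simp [Fin.le_def]; omega)
  have hTval : ∀ g : Fin m, (g : ℕ) ≤ 2 * n - k → c ≤ v i g := by
    intro g hg
    exact hord i g ⟨2 * n - k, by omega⟩ (by simp [Fin.le_def]; omega)
  have hKval : ∀ g : Fin m, (g : ℕ) < k → a ≤ v i g := by
    intro g hg
    exact hord i g ⟨k - 1, by omega⟩ (by simp [Fin.le_def]; omega)
  -- two distinct goods in the same bundle have value sum ≤ 1
  have hpair : ∀ g g' : Fin m, g ≠ g' → P g = P g' → v i g + v i g' ≤ 1 := by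
    intro g g' hne hgg
    have hsub : ({g, g'} : Finset (Fin m)) ⊆
        Finset.univ.filter (fun x => P x = P g) := by
      intro x hx
      simp only [Finset.mem_insert, Finset.mem_singleton] at hx
      rcases hx with rfl | rfl <;> simp [hgg]
    calc v i g + v i g' = ∑ x ∈ ({g, g'} : Finset (Fin m)), v i x := by
            rw [Finset.sum_pair hne]
      _ ≤ ∑ x ∈ Finset.univ.filter (fun x => P x = P g), v i x :=
            Finset.sum_le_sum_of_subset_of_nonneg hsub (fun x _ _ => hv i x)
      _ = 1 := hP (P g)
  set T : Finset (Fin m) := Finset.univ.filter (fun g => (g : ℕ) ≤ 2 * n - k) with hT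
  set K : Finset (Fin m) := Finset.univ.filter (fun g => (g : ℕ) < k) with hK
  have hTcard : T.card = 2 * n - k + 1 := by
    have : T = Finset.Iic (⟨2 * n - k, by omega⟩ : Fin m) := by
      ext g
      simp only [hT, Finset.mem_filter, Finset.mem_univ, true_and, Finset.mem_Iic,
        Fin.le_def]
    rw [this, Fin.card_Iic]
  have hKcard : K.card = k := by
    have : K = Finset.Iic (⟨k - 1, by omega⟩ : Fin m) := by
      ext g
      have hval : ((⟨k - 1, by omega⟩ : Fin m) : ℕ) = k - 1 := rfl
      simp only [hK, Finset.mem_filter, Finset.mem_univ, true_and, Finset.mem_Iic,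
        Fin.le_def, hval]
      omega
    rw [this, Fin.card_Iic]
    show k - 1 + 1 = k
    omega
  have hKT : K ⊆ T := by
    intro g hg; simp [hK, hT] at *; omega
  -- P is injective on K
  have hinj : Set.InjOn P (K : Set (Fin m)) := by
    intro g hg g' hg' hgg
    by_contra hne
    have h1 : a ≤ v i g := hKval g (by simpa [hK] using hg)
    have h2 : a ≤ v i g' := hKval g' (by simpa [hK] using hg')
    have := hpair g g' hne hgg
    linarith
  set img : Finset (Fin n) := K.image P with himg
  have himgcard : img.card = k := by
    rw [himg, Finset.card_image_of_injOn hinj, hKcard]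
  -- bundles receiving a good from K contain exactly one good from T
  have hone : ∀ b ∈ img, (T.filter (fun g => P g = b)).card = 1 := by
    intro b hb
    rw [himg, Finset.mem_image] at hb
    obtain ⟨g₀, hg₀K, hg₀⟩ := hb
    rw [Finset.card_eq_one]
    refine ⟨g₀, ?_⟩
    ext g
    simp only [Finset.mem_filter, Finset.mem_singleton]
    constructor
    · rintro ⟨hgT, hgb⟩
      by_contra hne
      have h1 : a ≤ v i g₀ := hKval g₀ (by simpa [hK] using hg₀K)
      have h2 : c ≤ v i g := hTval g (by simpa [hT] using hgT)
      have := hpair g₀ g (fun e => hne e.symm) (by rw [hg₀, hgb])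
      linarith
    · rintro rfl
      exact ⟨hKT hg₀K, hg₀⟩
  have hfib : T.card = ∑ b : Fin n, (T.filter (fun g => P g = b)).card :=
    Finset.card_eq_sum_card_fiberwise (fun x _ => Finset.mem_univ _)
  have hsplit : ∑ b ∈ Finset.univ \ img, (T.filter (fun g => P g = b)).card
      + ∑ b ∈ img, (T.filter (fun g => P g = b)).card
      = ∑ b : Fin n, (T.filter (fun g => P g = b)).card :=
    Finset.sum_sdiff (Finset.subset_univ img)
  have himgsum : ∑ b ∈ img, (T.filter (fun g => P g = b)).card = k := by
    rw [Finset.sum_congr rfl hone, Finset.sum_const, smul_eq_mul, himgcard, mul_one]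
  have hcompcard : (Finset.univ \ img).card = n - k := by
    rw [Finset.card_sdiff_of_subset (Finset.subset_univ img), himgcard]
    simp
  -- pigeonhole: some bundle outside img has ≥ 3 goods from T
  have hex : ∃ b ∈ Finset.univ \ img, 3 ≤ (T.filter (fun g => P g = b)).card := by
    by_contra hcon
    push_neg at hcon
    have hle : ∑ b ∈ Finset.univ \ img, (T.filter (fun g => P g = b)).card
        ≤ (Finset.univ \ img).card * 2 := by
      apply Finset.sum_le_card_nsmul
      intro b hb
      have := hcon b hb
      omega
    rw [hcompcard] at hle
    omega
  obtain ⟨b₀, _, hb₀⟩ := hex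
  have h3c : 3 * c ≤ 1 := by
    have hlow : ∀ g ∈ T.filter (fun g => P g = b₀), c ≤ v i g := by
      intro g hg
      simp only [hT, Finset.mem_filter, Finset.mem_univ, true_and] at hg
      exact hTval g hg.1
    have h1 : (T.filter (fun g => P g = b₀)).card • c
        ≤ ∑ g ∈ T.filter (fun g => P g = b₀), v i g :=
      Finset.card_nsmul_le_sum _ _ _ hlow
    have h2 : ∑ g ∈ T.filter (fun g => P g = b₀), v i g ≤ 1 := by
      calc ∑ g ∈ T.filter (fun g => P g = b₀), v i g
          ≤ ∑ g ∈ Finset.univ.filter (fun g => P g = b₀), v i g := by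
            apply Finset.sum_le_sum_of_subset_of_nonneg
            · intro g hg
              simp only [Finset.mem_filter] at hg ⊢
              exact ⟨Finset.mem_univ _, hg.2⟩
            · exact fun g _ _ => hv i g
        _ = 1 := hP b₀
    have hcge : (3 : ℝ) * c ≤ (T.filter (fun g => P g = b₀)).card • c := by
      rw [nsmul_eq_mul]
      have hc0 : 0 ≤ c := hv i _
      have : (3 : ℝ) ≤ ((T.filter (fun g => P g = b₀)).card : ℝ) := by
        exact_mod_cast hb₀
      nlinarith
    linarith
  constructor
  · linarith
  · linarith
end

section
/- Let k ≥ 2 be an integer, ε ≥ 0, and let a be a bag with v(a) ≥ 1−ε containing k items h₁ ≤ … ≤ h_k (sorted by value) designated as high-valued, and let G be a set of k−1 items of total value v(G). If after swapping H[1:k−1] out of a and G into a the new bag ā satisfies v(ā) = v(a) − v(H[1:k−1]) + v(G) < 4/5, then v(h_k) > (1/(k−1))(1/5 − ε + v(G)), and consequently (1/(k−1))(1/5 − ε) + (k/(k−1))·v(G) < 4/5. -/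
/-- Key inequality chain of the SHV swapping lemma.  Bag `a` has `v(a) ≥ 1 - ε` and
contains `k` high-valued items `h 0, …, h (k-1)` sorted in ascending order of value;
`vG` is the total value of the `k-1` swapped-in items.  If after swapping out the
`k-1` smallest high-valued items and swapping in `G` the new bag has value
`v(a) - v(H[1:k-1]) + vG < 4/5`, then
`v(h_k) > (1/(k-1))·(1/5 - ε + vG)` and consequently
`(1/(k-1))·(1/5 - ε) + (k/(k-1))·vG < 4/5`. -/
theorem shv_swap_inequalities {γ : Type*} [DecidableEq γ]
    (k : ℕ) (hk : 2 ≤ k) (ε : ℝ) (hε : 0 ≤ ε)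
    (v : γ → ℝ) (hv : ∀ g, 0 ≤ v g)
    (a : Finset γ)
    (h : Fin k → γ) (hinj : Function.Injective h) (hmem : ∀ i, h i ∈ a)
    (hsorted : ∀ i j : Fin k, i ≤ j → v (h i) ≤ v (h j))
    (vG : ℝ) (hvG : 0 ≤ vG)
    (ha : 1 - ε ≤ ∑ g ∈ a, v g)
    (hswap : (∑ g ∈ a, v g) - (∑ i ∈ Finset.univ.filter (fun i : Fin k => (i : ℕ) < k - 1), v (h i))
      + vG < 4 / 5) :
    (1 / (k - 1 : ℝ)) * (1 / 5 - ε + vG) < v (h ⟨k - 1, by omega⟩) ∧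
    (1 / (k - 1 : ℝ)) * (1 / 5 - ε) + ((k : ℝ) / (k - 1 : ℝ)) * vG < 4 / 5 := by
  set last : Fin k := ⟨k - 1, by omega⟩ with hlast
  set F : Finset (Fin k) := Finset.univ.filter (fun i : Fin k => (i : ℕ) < k - 1) with hF
  set S : ℝ := ∑ i ∈ F, v (h i) with hS
  have hk1 : (1 : ℝ) ≤ (k : ℝ) - 1 := by
    have : (2 : ℝ) ≤ (k : ℝ) := by exact_mod_cast hk
    linarith
  have hk1pos : (0 : ℝ) < (k : ℝ) - 1 := by linarith
  -- card of F is k - 1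
  have hcard : F.card = k - 1 := by
    have : F = Finset.univ.filter (fun i : Fin k => i < last) := by
      apply Finset.filter_congr
      intro i _
      simp [hlast, Fin.lt_def]
    rw [this, show Finset.univ.filter (fun i => i < last) = Finset.Iio last by ext i; simp]
    simp [hlast]
  -- S ≤ (k-1) * v(h last)
  have hSle : S ≤ ((k : ℝ) - 1) * v (h last) := by
    have : S ≤ ∑ _i ∈ F, v (h last) := by
      apply Finset.sum_le_sum
      intro i hi
      exact hsorted i last (by
        simp [hF, Finset.mem_filter] at hi
        simp [Fin.le_def, hlast]; omega)
    rw [Finset.sum_const, hcard] at this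
    have hc : ((k - 1 : ℕ) : ℝ) = (k : ℝ) - 1 := by
      push_cast [Nat.cast_sub (by omega : 1 ≤ k)]; ring
    rw [nsmul_eq_mul, hc] at this
    exact this
  -- S + v(h last) ≤ v(a)
  have hsuma : S + v (h last) ≤ ∑ g ∈ a, v g := by
    have hlastF : last ∉ F := by simp [hF, hlast]
    have h1 : S + v (h last) = ∑ i ∈ insert last F, v (h i) := by
      rw [Finset.sum_insert hlastF]; ring
    have h2 : ∑ i ∈ insert last F, v (h i) = ∑ g ∈ (insert last F).image h, v g := by
      rw [Finset.sum_image (fun x _ y _ hxy => hinj hxy)]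
    have h3 : (insert last F).image h ⊆ a := by
      intro g hg
      simp only [Finset.mem_image] at hg
      obtain ⟨i, _, rfl⟩ := hg
      exact hmem i
    rw [h1, h2]
    exact Finset.sum_le_sum_of_subset_of_nonneg h3 (fun g _ _ => hv g)
  -- S > 1/5 - ε + vG
  have hSgt : 1 / 5 - ε + vG < S := by linarith
  have h1 : (1 / ((k : ℝ) - 1)) * (1 / 5 - ε + vG) < v (h last) := by
    rw [div_mul_eq_mul_div, one_mul, div_lt_iff₀ hk1pos]
    calc 1 / 5 - ε + vG < S := hSgt
      _ ≤ v (h last) * ((k : ℝ) - 1) := by linarith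
  refine ⟨h1, ?_⟩
  -- v(h last) < 4/5 - vG
  have h2 : v (h last) < 4 / 5 - vG := by linarith
  have h3 : (1 / ((k : ℝ) - 1)) * (1 / 5 - ε + vG) < 4 / 5 - vG := lt_trans h1 h2
  have : (1 / ((k : ℝ) - 1)) * (1 / 5 - ε) + ((k : ℝ) / ((k : ℝ) - 1)) * vG
      = (1 / ((k : ℝ) - 1)) * (1 / 5 - ε + vG) + vG := by
    field_simp
    ring
  linarith [this]
end

section
/- Let v be an additive valuation with v([m]) = n (normalized instance) and let 0 < α ≤ 4/5. Suppose T₁ + T₂ = n with T₁ ≥ n/2. If T₁ bags each have v-value less than α, and T₂ further bags are produced by bag-filling so that each has v-value at most 3α/2, then the total value of all n bags is strictly less than n. Hence the bag-filling process cannot exhaust the goods before all T₂ bags are claimed. -/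
/-- Counting argument for the 2-type 4/5-MMS algorithm.  In a normalized instance
the total available value is `n`.  If `T₁ + T₂ = n` with `T₁ ≥ n/2`, the `T₁` bags
given to the majority each have value `< α`, and the `T₂` bags produced by
bag-filling each have value `≤ 3α/2` (items added have value `≤ α/2`), then the
total value of all `n` bags is strictly less than `n`, so bag-filling never
exhausts the goods. -/
theorem two_type_bag_filling_total (n T₁ T₂ : ℕ) (hn : 0 < n)
    (hsum : T₁ + T₂ = n) (hmaj : (n : ℝ) / 2 ≤ T₁)
    (α : ℝ) (hα0 : 0 < α) (hα : α ≤ 4 / 5)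
    (B₁ : Fin T₁ → ℝ) (hB₁ : ∀ i, B₁ i < α)
    (B₂ : Fin T₂ → ℝ) (hB₂ : ∀ i, B₂ i ≤ 3 * α / 2) :
    (∑ i, B₁ i) + (∑ i, B₂ i) < n := by
  have hn' : (0 : ℝ) < n := by exact_mod_cast hn
  have hT1pos : 0 < T₁ := by
    by_contra h
    push_neg at h
    interval_cases T₁
    simp at hmaj
    linarith
  have h1 : ∑ i, B₁ i < T₁ * α := by
    calc ∑ i, B₁ i < ∑ _i : Fin T₁, α := by
          apply Finset.sum_lt_sum_of_nonempty
          · haveI : Nonempty (Fin T₁) := Fin.pos_iff_nonempty.mp hT1pos; exact Finset.univ_nonempty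
          · intro i _; exact hB₁ i
      _ = T₁ * α := by simp [mul_comm]
  have h2 : ∑ i, B₂ i ≤ T₂ * (3 * α / 2) := by
    calc ∑ i, B₂ i ≤ ∑ _i : Fin T₂, (3 * α / 2) :=
          Finset.sum_le_sum fun i _ => hB₂ i
      _ = T₂ * (3 * α / 2) := by simp [mul_comm]
  have hcast : (T₁ : ℝ) + T₂ = n := by exact_mod_cast congrArg (Nat.cast : ℕ → ℝ) hsum
  nlinarith [h1, h2, hmaj, hα0, hα, hn']
end
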